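/- arXiv:1703.07594 — 2 statements merged into one kernel-verified Lean document; each statement's English description precedes it below -/
import Mathlib

section
/- Suppose u, m : [0,∞) → ℝ extend to smooth radially symmetric functions on ℝ^d (so in particular u'(0) = 0), m is positive, and the pair solves the radial first-order MFG system: u'(r)²/(2 m(r)^α) + V(r) = m(r)^β + H and the radial Fokker–Planck equation on [0,∞). Then u is constant and m(r) = (V(r) - H)^(1/β) for all r ≥ 0. -/
/-!
The Fokker–Planck equation says that the radial flux `m^(1-α) r^(d-1) u'` has zero derivative
on `(0, ∞)`. The flux vanishes at the origin and is continuous there, so it vanishes identically;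
as `m > 0`, this forces `u' = 0`. Then `u` is constant, and the Hamilton–Jacobi equation reduces
to `m^β = V - H`.
-/

open Real Set

theorem eq_of_hasDerivAt_eq_zero_of_continuousWithinAt {f : ℝ → ℝ} {a : ℝ}
    (hf : ContinuousWithinAt f (Ici a) a) (hderiv : ∀ x > a, HasDerivAt f 0 x) :
    ∀ x ≥ a, f x = f a := by
  intro x hx
  rcases hx.eq_or_lt with rfl | hax
  · rfl
  have hcont : ContinuousOn f (Icc a x) := by
    intro y hy
    rcases hy.1.eq_or_lt with rfl | hay
    · exact hf.mono Icc_subset_Ici_self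
    · exact (hderiv y hay).continuousAt.continuousWithinAt
  obtain ⟨c, -, hc⟩ :=
    exists_hasDerivAt_eq_slope f (fun _ => 0) hax hcont fun y hy => hderiv y hy.1
  rw [eq_comm, div_eq_zero_iff, sub_eq_zero, sub_eq_zero] at hc
  exact hc.resolve_right hax.ne'

/-- The flux of the radial Fokker–Planck equation in dimension `k + 1`. -/
noncomputable def radialFlux (α : ℝ) (k : ℕ) (m w : ℝ → ℝ) (r : ℝ) : ℝ :=
  m r ^ (1 - α) * (r ^ k * w r)

theorem hasDerivAt_radialFlux (α : ℝ) (k : ℕ) {m w : ℝ → ℝ} {r : ℝ} (hr : r ≠ 0)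
    (hmr : 0 < m r) (hm : DifferentiableAt ℝ m r) (hw : DifferentiableAt ℝ w r) :
    HasDerivAt (radialFlux α k m w)
      (m r ^ (-α) * r ^ k *
        ((1 - α) * deriv m r * w r + m r * (deriv w r + k / r * w r))) r := by
  have hpow : HasDerivAt (fun s : ℝ => m s ^ (1 - α)) (deriv m r * (1 - α) * m r ^ (-α)) r := by
    simpa using hm.hasDerivAt.rpow_const (p := 1 - α) (Or.inl hmr.ne')
  have hrk : (k : ℝ) * r ^ (k - 1) = k / r * r ^ k := by
    rcases k with _ | k
    · simp
    · field_simp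
      simp [pow_succ]
  refine (hpow.mul ((hasDerivAt_pow k r).mul hw.hasDerivAt)).congr_deriv ?_
  rw [hrk, show 1 - α = -α + 1 by ring, rpow_add_one hmr.ne', Pi.mul_apply]
  ring

theorem eq_zero_of_radial_fokkerPlanck (α : ℝ) (k : ℕ) {m w : ℝ → ℝ}
    (hm : ∀ r ≥ (0 : ℝ), DifferentiableAt ℝ m r) (hw : ∀ r ≥ (0 : ℝ), DifferentiableAt ℝ w r)
    (hmpos : ∀ r ≥ (0 : ℝ), 0 < m r) (hw0 : w 0 = 0)
    (hFP : ∀ r > (0 : ℝ), (1 - α) * deriv m r * w r + m r * (deriv w r + k / r * w r) = 0) :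
    ∀ r ≥ (0 : ℝ), w r = 0 := by
  have hflux_cont : ContinuousWithinAt (radialFlux α k m w) (Ici 0) 0 :=
    (((hm 0 le_rfl).continuousAt.rpow_const (Or.inl (hmpos 0 le_rfl).ne')).mul
      ((continuous_pow k).continuousAt.mul (hw 0 le_rfl).continuousAt)).continuousWithinAt
  have hflux_deriv : ∀ r > (0 : ℝ), HasDerivAt (radialFlux α k m w) 0 r := fun r hr => by
    simpa [hFP r hr] using
      hasDerivAt_radialFlux α k hr.ne' (hmpos r hr.le) (hm r hr.le) (hw r hr.le)
  have hflux : ∀ r ≥ (0 : ℝ), radialFlux α k m w r = 0 := fun r hr => by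
    simpa [radialFlux, hw0] using
      eq_of_hasDerivAt_eq_zero_of_continuousWithinAt hflux_cont hflux_deriv r hr
  intro r hr
  rcases hr.eq_or_lt with rfl | hr
  · exact hw0
  simpa [radialFlux, (rpow_pos_of_pos (hmpos r hr.le) _).ne', hr.ne'] using hflux r hr.le

theorem smooth_radial_solutions_whole_space_general
    (d : ℕ) (hd : 2 ≤ d) (α β H : ℝ) (hβ : 0 < β)
    (V u m : ℝ → ℝ)
    (hu : ∀ r ≥ (0:ℝ), DifferentiableAt ℝ u r)
    (hu' : ∀ r ≥ (0:ℝ), DifferentiableAt ℝ (deriv u) r)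
    (hm : ∀ r ≥ (0:ℝ), DifferentiableAt ℝ m r)
    (hu0 : deriv u 0 = 0)
    (hmpos : ∀ r ≥ (0:ℝ), 0 < m r)
    (hHJ : ∀ r ≥ (0:ℝ),
      (deriv u r) ^ 2 / (2 * m r ^ α) + V r = m r ^ β + H)
    (hFP : ∀ r > (0:ℝ),
      (1 - α) * deriv m r * deriv u r
        + m r * (deriv (deriv u) r + ((d:ℝ) - 1) / r * deriv u r) = 0) :
    (∀ r ≥ (0:ℝ), u r = u 0) ∧
    (∀ r ≥ (0:ℝ), m r = (V r - H) ^ (1 / β)) := by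
  have hdim : ((d : ℝ) - 1) = ((d - 1 : ℕ) : ℝ) := by
    rw [Nat.cast_sub (by omega), Nat.cast_one]
  have hu'_zero : ∀ r ≥ (0:ℝ), deriv u r = 0 :=
    eq_zero_of_radial_fokkerPlanck α (d - 1) hm hu' hmpos hu0 fun r hr => hdim ▸ hFP r hr
  refine ⟨?_, fun r hr => ?_⟩
  · exact eq_of_hasDerivAt_eq_zero_of_continuousWithinAt
      (hu 0 le_rfl).continuousAt.continuousWithinAt
      fun r hr => hu'_zero r hr.le ▸ (hu r hr.le).hasDerivAt
  have hVH : V r - H = m r ^ β := by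
    have := hHJ r hr
    rw [hu'_zero r hr, zero_pow two_ne_zero, zero_div, zero_add] at this
    linarith
  rw [hVH, one_div, rpow_rpow_inv (hmpos r hr).le hβ.ne']

theorem smooth_radial_solutions_whole_space
    (d : ℕ) (hd : 2 ≤ d) (α β H : ℝ) (hα0 : 0 ≤ α) (hα2 : α < 2) (hβ : 0 < β)
    (V u m : ℝ → ℝ)
    (hu : ∀ r ≥ (0:ℝ), DifferentiableAt ℝ u r)
    (hu' : ∀ r ≥ (0:ℝ), DifferentiableAt ℝ (deriv u) r)
    (hm : ∀ r ≥ (0:ℝ), DifferentiableAt ℝ m r)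
    (hu0 : deriv u 0 = 0)
    (hmpos : ∀ r ≥ (0:ℝ), 0 < m r)
    (hHJ : ∀ r ≥ (0:ℝ),
      (deriv u r) ^ 2 / (2 * m r ^ α) + V r = m r ^ β + H)
    (hFP : ∀ r > (0:ℝ),
      (1 - α) * deriv m r * deriv u r
        + m r * (deriv (deriv u) r + ((d:ℝ) - 1) / r * deriv u r) = 0) :
    (∀ r ≥ (0:ℝ), u r = u 0) ∧
    (∀ r ≥ (0:ℝ), m r = (V r - H) ^ (1 / β)) :=
  smooth_radial_solutions_whole_space_general d hd α β H hβ V u m hu hu' hm hu0 hmpos hHJ hFP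
end

section
/- Assume 2/d < α < min(2, 2/d + β), j ≠ 0, and V continuous on (0,∞) with V(r) r^σ → 0 as r → 0⁺ and as r → ∞, where σ = 2β(d-1)/(2+β-α). Then for every H > 0, the integral ∫₀^∞ r^((d-1)(β-α)/(2+β-α)) [F_j^{-1}((H - V(r)) r^σ)]^(1/β) dr is finite, where F_j(t) = (j²/2)t^((α-2)/β) - t is the decreasing bijection (0,∞) → ℝ. -/
/-!
Write `y(r) = (H - V r) r^σ` and `t = F_j^{-1}(y)`, so that `(j²/2) t^q - t = y` with
`q = (α-2)/β < 0`; in particular `F_j^{-1}` is antitone. Near `0`, `V r r^σ → 0` keeps `y`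
bounded below, so `t^(1/β)` is bounded and the integrand is `O(r^p)` with
`p = (d-1)(β-α)/(2+β-α) > -1` because `α < 2/d + β`. Near `∞`, `y ≥ (H/2) r^σ`, and
`(j²/2) t^q ≥ y` gives `t^(1/β) ≲ r^(σ/(α-2))`; the integrand is then `O(r^(p + σ/(α-2)))`,
and `p + σ/(α-2) = -(d-1)α/(2-α) < -1` because `α > 2/d`.
-/

open Real MeasureTheory Filter Set Topology

section ImplicitInverse

variable {c κ β : ℝ}

lemma antitone_of_mul_rpow_sub_eq {f : ℝ → ℝ} {q : ℝ} (hc : 0 < c) (hq : q < 0)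
    (hpos : ∀ y, 0 < f y) (hf : ∀ y, c * f y ^ q - f y = y) : Antitone f := by
  intro y z hyz
  by_contra! hlt
  have : c * f z ^ q < c * f y ^ q :=
    mul_lt_mul_of_pos_left (rpow_lt_rpow_of_neg (hpos y) hlt hq) hc
  linarith [hf y, hf z]

lemma rpow_inv_le_of_le_mul_rpow_sub {t y : ℝ} (hc : 0 < c) (hβ : 0 < β) (hκ : κ < 0)
    (ht : 0 < t) (hy : 0 < y) (h : y ≤ c * t ^ (κ / β) - t) :
    t ^ (1 / β) ≤ (y / c) ^ κ⁻¹ := by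
  have hyc : y / c ≤ t ^ (κ / β) := by
    rw [div_le_iff₀ hc]
    linarith
  calc t ^ (1 / β) = (t ^ (κ / β)) ^ κ⁻¹ := by
        rw [← rpow_mul ht.le]
        congr 1
        field_simp [hκ.ne]
    _ ≤ (y / c) ^ κ⁻¹ := rpow_le_rpow_of_nonpos (div_pos hy hc) hyc (inv_nonpos.mpr hκ.le)

end ImplicitInverse

lemma ContinuousOn.bddAbove_image_Ioc_of_tendsto {W : ℝ → ℝ} {a : ℝ}
    (hW : ContinuousOn W (Ioi 0)) (h0 : Tendsto W (𝓝[>] 0) (𝓝 a)) (R : ℝ) :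
    BddAbove (W '' Ioc 0 R) := by
  obtain ⟨ε, hε, hlt⟩ :=
    mem_nhdsGT_iff_exists_Ioo_subset.mp (h0.eventually (gt_mem_nhds (lt_add_one a)))
  refine BddAbove.mono (image_mono (Ioc_subset_Ioo_union_Icc (b := ε))) ?_
  rw [image_union]
  refine .union ⟨a + 1, ?_⟩ (isCompact_Icc.image_of_continuousOn (hW.mono ?_)).bddAbove
  · rintro _ ⟨r, hr, rfl⟩
    exact (hlt hr).le
  · exact fun r hr => lt_of_lt_of_le hε hr.1

section PowerBounds

variable {f : ℝ → ℝ} {C e R : ℝ}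

lemma integrableOn_Ioc_of_norm_le_mul_rpow (he : -1 < e)
    (hf : AEStronglyMeasurable f (volume.restrict (Ioc 0 R)))
    (hle : ∀ r ∈ Ioc 0 R, ‖f r‖ ≤ C * r ^ e) : IntegrableOn f (Ioc 0 R) := by
  refine Integrable.mono' ((intervalIntegral.intervalIntegrable_rpow' he).1.const_mul C) hf ?_
  filter_upwards [ae_restrict_mem measurableSet_Ioc] with r hr using hle r hr

lemma integrableOn_Ioi_of_norm_le_mul_rpow (he : e < -1) (hR : 0 < R)
    (hf : AEStronglyMeasurable f (volume.restrict (Ioi R)))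
    (hle : ∀ r ∈ Ioi R, ‖f r‖ ≤ C * r ^ e) : IntegrableOn f (Ioi R) := by
  refine Integrable.mono' ((integrableOn_Ioi_rpow_of_lt he hR).const_mul C) hf ?_
  filter_upwards [ae_restrict_mem measurableSet_Ioi] with r hr using hle r hr

end PowerBounds

section Integrability

variable {u g : ℝ → ℝ} {p R : ℝ}

lemma aestronglyMeasurable_rpow_mul_comp {s : ℝ} (hu : Measurable u)
    (hg : ContinuousOn g (Ioi 0)) :
    AEStronglyMeasurable (fun r => r ^ p * u (g r) ^ s) (volume.restrict (Ioi 0)) :=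
  ((continuousOn_id.rpow_const fun _ hr => Or.inl (ne_of_gt hr)).aemeasurable measurableSet_Ioi).mul
    ((hu.pow_const s).comp_aemeasurable (hg.aemeasurable measurableSet_Ioi))
    |>.aestronglyMeasurable

lemma integrableOn_Ioc_rpow_mul_comp_of_antitone {s m : ℝ} (hu : Antitone u)
    (hu0 : ∀ y, 0 ≤ u y) (hs : 0 ≤ s) (hp : -1 < p)
    (hf : AEStronglyMeasurable (fun r => r ^ p * u (g r) ^ s) (volume.restrict (Ioc 0 R)))
    (hg : ∀ r ∈ Ioc 0 R, m ≤ g r) :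
    IntegrableOn (fun r => r ^ p * u (g r) ^ s) (Ioc 0 R) :=
  integrableOn_Ioc_of_norm_le_mul_rpow (C := u m ^ s) hp hf fun r hr => by
    rw [norm_of_nonneg (mul_nonneg (rpow_nonneg hr.1.le _) (rpow_nonneg (hu0 _) _)), mul_comm]
    exact mul_le_mul_of_nonneg_right (rpow_le_rpow (hu0 _) (hu (hg r hr)) hs)
      (rpow_nonneg hr.1.le _)

lemma integrableOn_Ioi_rpow_mul_comp_of_mul_rpow_sub_eq {c β κ σ A : ℝ} (hc : 0 < c)
    (hβ : 0 < β) (hκ : κ < 0) (hA : 0 < A) (hR : 0 < R) (he : p + σ / κ < -1)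
    (hu0 : ∀ y, 0 < u y) (hu : ∀ y, c * u y ^ (κ / β) - u y = y)
    (hf : AEStronglyMeasurable (fun r => r ^ p * u (g r) ^ (1 / β)) (volume.restrict (Ioi R)))
    (hg : ∀ r ∈ Ioi R, A * r ^ σ ≤ g r) :
    IntegrableOn (fun r => r ^ p * u (g r) ^ (1 / β)) (Ioi R) :=
  integrableOn_Ioi_of_norm_le_mul_rpow (C := (A / c) ^ κ⁻¹) he hR hf fun r hr => by
    have hr0 : 0 < r := hR.trans hr
    have hy : A * r ^ σ ≤ c * u (g r) ^ (κ / β) - u (g r) := (hu (g r)).symm ▸ hg r hr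
    calc ‖r ^ p * u (g r) ^ (1 / β)‖ = r ^ p * u (g r) ^ (1 / β) :=
          norm_of_nonneg (mul_nonneg (rpow_nonneg hr0.le _) (rpow_nonneg (hu0 _).le _))
      _ ≤ r ^ p * (A * r ^ σ / c) ^ κ⁻¹ :=
          mul_le_mul_of_nonneg_left (rpow_inv_le_of_le_mul_rpow_sub hc hβ hκ (hu0 _)
            (by positivity) hy) (rpow_nonneg hr0.le _)
      _ = (A / c) ^ κ⁻¹ * r ^ (p + σ / κ) := by
          rw [mul_div_right_comm, mul_rpow (div_pos hA hc).le (rpow_nonneg hr0.le _),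
            ← rpow_mul hr0.le, mul_left_comm, ← rpow_add hr0, div_eq_mul_inv σ]

end Integrability

section Exponents

variable {d α β : ℝ}

lemma neg_one_lt_weight_exponent (hd : 0 < d) (hα : α < 2 + β) (hαβ : α < 2 / d + β) :
    -1 < (d - 1) * (β - α) / (2 + β - α) := by
  have : d * α < 2 + d * β := by
    have := mul_lt_mul_of_pos_left hαβ hd
    rwa [mul_add, mul_div_cancel₀ _ hd.ne'] at this
  rw [lt_div_iff₀ (by linarith)]
  linarith

lemma weight_exponent_add_div_lt_neg_one (hd : 0 < d) (hβ : 0 < β) (hα2 : α < 2)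
    (hαd : 2 / d < α) :
    (d - 1) * (β - α) / (2 + β - α) + 2 * β * (d - 1) / (2 + β - α) / (α - 2) < -1 := by
  have hdα : 2 < d * α := by rwa [div_lt_iff₀ hd, mul_comm] at hαd
  have hsum : (d - 1) * (β - α) / (2 + β - α) + 2 * β * (d - 1) / (2 + β - α) / (α - 2)
      = -((d - 1) * α / (2 - α)) := by
    field_simp [show 2 + β - α ≠ 0 by linarith, show α - 2 ≠ 0 by linarith,
      show 2 - α ≠ 0 by linarith]
    ring
  rw [hsum, neg_lt_neg_iff, lt_div_iff₀ (by linarith)]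
  linarith

end Exponents

theorem phi_finite_general
    (d : ℕ) (hd : 2 ≤ d) (α β j : ℝ) (hβ : 0 < β)
    (hαl : 2 / (d:ℝ) < α) (hαu : α < min 2 (2 / (d:ℝ) + β)) (hj : j ≠ 0)
    (V : ℝ → ℝ) (hV : ContinuousOn V (Set.Ioi 0))
    (hV0 : Tendsto (fun r => V r * r ^ (2 * β * ((d:ℝ) - 1) / (2 + β - α)))
      (nhdsWithin 0 (Set.Ioi 0)) (nhds 0))
    (hVinf : Tendsto (fun r => V r * r ^ (2 * β * ((d:ℝ) - 1) / (2 + β - α)))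
      atTop (nhds 0))
    (Finv : ℝ → ℝ)
    (hFinv_pos : ∀ y : ℝ, 0 < Finv y)
    (hFinv_right : ∀ y : ℝ, j ^ 2 / 2 * (Finv y) ^ ((α - 2) / β) - Finv y = y) :
    ∀ H > (0:ℝ), IntegrableOn
      (fun r => r ^ (((d:ℝ) - 1) * (β - α) / (2 + β - α)) *
        (Finv ((H - V r) * r ^ (2 * β * ((d:ℝ) - 1) / (2 + β - α)))) ^ (1 / β))
      (Set.Ioi 0) := by
  intro H hH
  set σ := 2 * β * ((d:ℝ) - 1) / (2 + β - α)
  set p := ((d:ℝ) - 1) * (β - α) / (2 + β - α)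
  have hd2 : (2:ℝ) ≤ d := mod_cast hd
  have hα2 : α < 2 := hαu.trans_le (min_le_left _ _)
  have hσ0 : 0 ≤ σ := div_nonneg (mul_nonneg (by positivity) (by linarith)) (by linarith)
  have hc : 0 < j ^ 2 / 2 := by positivity
  have hanti : Antitone Finv :=
    antitone_of_mul_rpow_sub_eq hc (div_neg_of_neg_of_pos (by linarith) hβ) hFinv_pos hFinv_right
  have hrpow : ContinuousOn (fun r : ℝ => r ^ σ) (Ioi 0) :=
    continuousOn_id.rpow_const fun r hr => Or.inl (ne_of_gt hr)
  have hmeas : AEStronglyMeasurable (fun r => r ^ p * Finv ((H - V r) * r ^ σ) ^ (1 / β))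
      (volume.restrict (Ioi 0)) :=
    aestronglyMeasurable_rpow_mul_comp hanti.measurable ((continuousOn_const.sub hV).mul hrpow)
  obtain ⟨R, hR⟩ := eventually_atTop.mp
    ((hVinf.eventually (ge_mem_nhds (half_pos hH))).and (eventually_ge_atTop 1))
  have hR0 : 0 < R := zero_lt_one.trans_le (hR R le_rfl).2
  obtain ⟨M, hM⟩ := (hV.mul hrpow).bddAbove_image_Ioc_of_tendsto hV0 R
  rw [← Ioc_union_Ioi_eq_Ioi hR0.le]
  refine .union ?_ ?_
  · refine integrableOn_Ioc_rpow_mul_comp_of_antitone (m := -M) hanti (fun y => (hFinv_pos y).le)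
      (by positivity)
      (neg_one_lt_weight_exponent (by linarith) (by linarith) (hαu.trans_le (min_le_right _ _)))
      (hmeas.mono_set Ioc_subset_Ioi_self) fun r hr => ?_
    have hVM : V r * r ^ σ ≤ M := hM ⟨r, hr, rfl⟩
    nlinarith [mul_nonneg hH.le (rpow_nonneg hr.1.le σ)]
  · refine integrableOn_Ioi_rpow_mul_comp_of_mul_rpow_sub_eq hc hβ (by linarith) (half_pos hH) hR0
      (weight_exponent_add_div_lt_neg_one (by linarith) hβ hα2 hαl) hFinv_pos hFinv_right
      (hmeas.mono_set fun r hr => hR0.trans hr) fun r hr => ?_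
    obtain ⟨hVH, hr1⟩ := hR r hr.le
    nlinarith [one_le_rpow hr1 hσ0]

theorem phi_finite
    (d : ℕ) (hd : 2 ≤ d) (α β j : ℝ) (hβ : 0 < β)
    (hαl : 2 / (d:ℝ) < α) (hαu : α < min 2 (2 / (d:ℝ) + β)) (hj : j ≠ 0)
    (V : ℝ → ℝ) (hV : ContinuousOn V (Set.Ioi 0))
    (hV0 : Tendsto (fun r => V r * r ^ (2 * β * ((d:ℝ) - 1) / (2 + β - α)))
      (nhdsWithin 0 (Set.Ioi 0)) (nhds 0))
    (hVinf : Tendsto (fun r => V r * r ^ (2 * β * ((d:ℝ) - 1) / (2 + β - α)))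
      atTop (nhds 0))
    (Finv : ℝ → ℝ)
    (hFinv_pos : ∀ y : ℝ, 0 < Finv y)
    (hFinv_left : ∀ t > (0:ℝ), Finv (j ^ 2 / 2 * t ^ ((α - 2) / β) - t) = t)
    (hFinv_right : ∀ y : ℝ, j ^ 2 / 2 * (Finv y) ^ ((α - 2) / β) - Finv y = y) :
    ∀ H > (0:ℝ), IntegrableOn
      (fun r => r ^ (((d:ℝ) - 1) * (β - α) / (2 + β - α)) *
        (Finv ((H - V r) * r ^ (2 * β * ((d:ℝ) - 1) / (2 + β - α)))) ^ (1 / β))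
      (Set.Ioi 0) :=
  phi_finite_general d hd α β j hβ hαl hαu hj V hV hV0 hVinf Finv hFinv_pos hFinv_right
end
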